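/- Let n ≥ 2 and let u ∈ ℤ^{n(n−1)} be a nonzero vector with uM = 0. Then the following are equivalent: (a) supp(u) is minimal with respect to inclusion among the supports of nonzero integer vectors v with vM = 0, and the greatest common divisor of the entries of u is 1; (b) u = u_{S,T} for some partition [n] = S ∪ T into two disjoint nonempty sets. (That is, the circuits of the toric ideal of the configuration {M̄_{i,j}} are exactly the binomials corresponding to the vectors u_{S,T}.) -/

import Mathlib

open Finset

/-- The matrix `M̄_{i,j}` (for `i ≠ j` in `[n]`, with the last index playing the role of `n`). -/
def Mbar (n : ℕ) (i j : Fin n) : Matrix (Fin (n - 1)) (Fin (n - 1)) ℝ :=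
  Matrix.of fun a b =>
    if (a : ℕ) = (i : ℕ) ∧ (b : ℕ) = (j : ℕ) then 1
    else if (a : ℕ) = (i : ℕ) ∧ (j : ℕ) = n - 1 then -1
    else if (i : ℕ) = n - 1 ∧ (b : ℕ) = (j : ℕ) then -1
    else 0

/-- `uM = ∑_{i ≠ j} u(i,j) · M̄_{i,j}`. -/
def uDotM (n : ℕ) (u : Fin n → Fin n → ℤ) : Matrix (Fin (n - 1)) (Fin (n - 1)) ℝ :=
  ∑ i, ∑ j, if i = j then 0 else (u i j : ℝ) • Mbar n i j

/-- The vector `u_{S,T}` for the partition `[n] = S ∪ Sᶜ`. -/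
def uST (n : ℕ) (S : Finset (Fin n)) (i j : Fin n) : ℤ :=
  if i ∈ S ∧ j ∉ S then 1 else if i ∉ S ∧ j ∈ S then -1 else 0

/-- The support `supp(u)` of a vector indexed by ordered pairs. -/
def suppV (n : ℕ) (u : Fin n → Fin n → ℤ) : Set (Fin n × Fin n) :=
  {e | u e.1 e.2 ≠ 0}

lemma uDotM_apply (n : ℕ) (hn : 2 ≤ n) (u : Fin n → Fin n → ℤ) (hdiag : ∀ i, u i i = 0)
    (a b : Fin (n-1)) :
    uDotM n u a b = (u (Fin.castLE (Nat.sub_le n 1) a) (Fin.castLE (Nat.sub_le n 1) b) : ℝ)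
      - (u (Fin.castLE (Nat.sub_le n 1) a) ⟨n-1, by omega⟩ : ℝ)
      - (u ⟨n-1, by omega⟩ (Fin.castLE (Nat.sub_le n 1) b) : ℝ) := by
  set A : Fin n := Fin.castLE (Nat.sub_le n 1) a with hA
  set B : Fin n := Fin.castLE (Nat.sub_le n 1) b with hB
  set L : Fin n := ⟨n-1, by omega⟩ with hL
  have hterm : ∀ i j : Fin n,
      (if i = j then (0 : Matrix (Fin (n-1)) (Fin (n-1)) ℝ) else (u i j : ℝ) • Mbar n i j) a b
      = (if i = A ∧ j = B then (u i j : ℝ) else 0)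
        + (if i = A ∧ j = L then -(u i j : ℝ) else 0)
        + (if i = L ∧ j = B then -(u i j : ℝ) else 0) := by
    intro i j
    have ha' : (a : ℕ) < n - 1 := a.isLt
    have hb' : (b : ℕ) < n - 1 := b.isLt
    have h1 : ((a : ℕ) = (i : ℕ)) ↔ i = A := by
      constructor <;> intro h <;> [exact Fin.ext h.symm; simp [h, hA]]
    have h2 : ((b : ℕ) = (j : ℕ)) ↔ j = B := by
      constructor <;> intro h <;> [exact Fin.ext h.symm; simp [h, hB]]
    have h3 : ((j : ℕ) = n - 1) ↔ j = L := by
      constructor <;> intro h <;> [exact Fin.ext h; simp [h, hL]]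
    have h4 : ((i : ℕ) = n - 1) ↔ i = L := by
      constructor <;> intro h <;> [exact Fin.ext h; simp [h, hL]]
    have hAL : A ≠ L := by simp [hA, hL, Fin.ext_iff]; omega
    have hBL : B ≠ L := by simp [hB, hL, Fin.ext_iff]; omega
    by_cases hij : i = j
    · subst hij
      simp [hdiag i, Mbar]
    · simp only [if_neg hij, Matrix.smul_apply, Mbar, Matrix.of_apply, h1, h2, h3, h4,
        smul_eq_mul]
      split_ifs with c1 c2 c3 <;> simp_all
  simp only [uDotM, Matrix.sum_apply, hterm, Finset.sum_add_distrib]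
  rw [Finset.sum_comm (f := fun i j => if i = A ∧ j = L then -(u i j : ℝ) else 0)]
  simp [ite_and, Finset.sum_ite_eq', sub_eq_add_neg]

/-- The key structure: `uDotM n u = 0` iff `u i j = f i - f j` for `f i := u i last`. -/
lemma ker_iff (n : ℕ) (hn : 2 ≤ n) (u : Fin n → Fin n → ℤ) (hdiag : ∀ i, u i i = 0) :
    uDotM n u = 0 ↔ ∀ i j, u i j = u i ⟨n-1, by omega⟩ - u j ⟨n-1, by omega⟩ := by
  set L : Fin n := ⟨n-1, by omega⟩ with hL
  constructor
  · intro hM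
    have key : ∀ a b : Fin (n-1), u (Fin.castLE (Nat.sub_le n 1) a) (Fin.castLE (Nat.sub_le n 1) b)
        = u (Fin.castLE (Nat.sub_le n 1) a) L + u L (Fin.castLE (Nat.sub_le n 1) b) := by
      intro a b
      have := uDotM_apply n hn u hdiag a b
      rw [hM] at this
      have : ((u (Fin.castLE (Nat.sub_le n 1) a) (Fin.castLE (Nat.sub_le n 1) b)
          - u (Fin.castLE (Nat.sub_le n 1) a) L - u L (Fin.castLE (Nat.sub_le n 1) b) : ℤ) : ℝ) = 0 := by
        push_cast
        simp only [Matrix.zero_apply] at this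
        linarith [this]
      have := Int.cast_injective (α := ℝ) (this.trans (Int.cast_zero).symm)
      omega
    -- u L j = - u j L for j ≠ L
    have hneg : ∀ b : Fin (n-1), u L (Fin.castLE (Nat.sub_le n 1) b)
        = - u (Fin.castLE (Nat.sub_le n 1) b) L := by
      intro b
      have := key b b
      rw [hdiag] at this
      omega
    have hcast : ∀ i : Fin n, i ≠ L → ∃ a : Fin (n-1), i = Fin.castLE (Nat.sub_le n 1) a := by
      intro i hi
      have : (i : ℕ) < n - 1 := by
        have := i.isLt
        have : (i : ℕ) ≠ n - 1 := fun h => hi (Fin.ext h)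
        omega
      exact ⟨⟨i, this⟩, Fin.ext rfl⟩
    intro i j
    by_cases hi : i = L <;> by_cases hj : j = L
    · subst hi; subst hj; simp [hdiag]
    · subst hi
      obtain ⟨b, rfl⟩ := hcast j hj
      rw [hneg b, hdiag]; ring
    · subst hj
      simp [hdiag]
    · obtain ⟨a, rfl⟩ := hcast i hi
      obtain ⟨b, rfl⟩ := hcast j hj
      rw [key a b, hneg b]; ring
  · intro h
    ext a b
    rw [uDotM_apply n hn u hdiag a b]
    simp only [Matrix.zero_apply]
    rw [h (Fin.castLE (Nat.sub_le n 1) a) (Fin.castLE (Nat.sub_le n 1) b)]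
    have h2 := h L (Fin.castLE (Nat.sub_le n 1) b)
    rw [hdiag L] at h2
    rw [h2]
    push_cast
    ring

lemma uST_diag (n : ℕ) (S : Finset (Fin n)) (i : Fin n) : uST n S i i = 0 := by
  simp [uST]

lemma uST_ker (n : ℕ) (hn : 2 ≤ n) (S : Finset (Fin n)) : uDotM n (uST n S) = 0 := by
  rw [ker_iff n hn _ (uST_diag n S)]
  intro i j
  by_cases hi : i ∈ S <;> by_cases hj : j ∈ S <;>
    by_cases hL : (⟨n-1, by omega⟩ : Fin n) ∈ S <;> simp [uST, hi, hj, hL]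

theorem stmt8 (n : ℕ) (hn : 2 ≤ n) (u : Fin n → Fin n → ℤ)
    (hdiag : ∀ i, u i i = 0) (hu : u ≠ 0) (hM : uDotM n u = 0) :
    ((∀ v : Fin n → Fin n → ℤ, (∀ i, v i i = 0) → v ≠ 0 → uDotM n v = 0 →
        suppV n v ⊆ suppV n u → suppV n v = suppV n u) ∧
      Finset.univ.gcd (fun e : Fin n × Fin n => u e.1 e.2) = 1) ↔
    ∃ S : Finset (Fin n), S.Nonempty ∧ Sᶜ.Nonempty ∧ u = uST n S := by
  have hnL : n - 1 < n := by omega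
  set L : Fin n := ⟨n-1, hnL⟩ with hLdef
  set f : Fin n → ℤ := fun i => u i L with hfdef
  have hf : ∀ i j, u i j = f i - f j := (ker_iff n hn u hdiag).mp hM
  -- nonconstancy of f
  have hnc : ∃ i j : Fin n, f i ≠ f j := by
    by_contra h
    push_neg at h
    apply hu
    funext i j
    rw [hf i j, h i j, sub_self]
    rfl
  constructor
  · rintro ⟨hmin, hgcd⟩
    obtain ⟨i₀, -, hi₀⟩ := Finset.exists_min_image Finset.univ f ⟨⟨0, by omega⟩, Finset.mem_univ _⟩
    simp only [Finset.mem_univ, forall_const] at hi₀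
    set m := f i₀ with hm
    set S : Finset (Fin n) := Finset.univ.filter (fun i => m < f i) with hS
    have hmemS : ∀ i, i ∈ S ↔ m < f i := by intro i; simp [hS]
    have hnotS : ∀ i, i ∉ S → f i = m := by
      intro i hi
      rw [hmemS] at hi
      have := hi₀ i
      omega
    have hSne : S.Nonempty := by
      obtain ⟨i, j, hij⟩ := hnc
      rcases lt_or_ge m (f i) with h | h
      · exact ⟨i, (hmemS i).mpr h⟩
      · have hfi : f i = m := le_antisymm h (hi₀ i)
        refine ⟨j, (hmemS j).mpr ?_⟩
        have := hi₀ j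
        omega
    have hScne : Sᶜ.Nonempty := ⟨i₀, by simp [hmemS, Finset.mem_compl]; exact le_rfl⟩
    obtain ⟨i₁, hi₁⟩ := hSne
    obtain ⟨j₁, hj₁⟩ := hScne
    rw [Finset.mem_compl] at hj₁
    set v : Fin n → Fin n → ℤ := uST n S with hv
    have hv0 : v ≠ 0 := by
      intro h
      have := congrFun (congrFun h i₁) j₁
      simp [hv, uST, hi₁, hj₁] at this
    have hsub : suppV n v ⊆ suppV n u := by
      rintro ⟨i, j⟩ he
      simp only [suppV, Set.mem_setOf_eq] at he ⊢
      rw [hf i j]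
      simp only [hv, uST] at he
      by_cases hi : i ∈ S <;> by_cases hj : j ∈ S <;> simp [hi, hj] at he ⊢
      · have := (hmemS i).mp hi
        have := hnotS j hj
        omega
      · have := (hmemS j).mp hj
        have := hnotS i hi
        omega
    have heq := hmin v (uST_diag n S) hv0 (uST_ker n hn S) hsub
    -- f is constant on S
    have hconst : ∀ i ∈ S, ∀ j ∈ S, f i = f j := by
      intro i hi j hj
      by_contra hne
      have : ((i, j) : Fin n × Fin n) ∈ suppV n u := by
        simp only [suppV, Set.mem_setOf_eq]
        rw [hf i j]
        omega
      rw [← heq] at this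
      simp [suppV, hv, uST, hi, hj] at this
    set c := f i₁ with hc
    have hfS : ∀ i ∈ S, f i = c := fun i hi => hconst i hi i₁ hi₁
    have hd : 0 < c - m := by
      have := (hmemS i₁).mp hi₁
      omega
    -- every entry is divisible by c - m
    have hdvd : (c - m) ∣ Finset.univ.gcd (fun e : Fin n × Fin n => u e.1 e.2) := by
      apply Finset.dvd_gcd
      rintro ⟨i, j⟩ -
      rw [hf i j]
      by_cases hi : i ∈ S <;> by_cases hj : j ∈ S <;>
        [rw [hfS i hi, hfS j hj]; rw [hfS i hi, hnotS j hj];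
         rw [hnotS i hi, hfS j hj]; rw [hnotS i hi, hnotS j hj]] <;>
        first
        | (rw [sub_self]; exact dvd_zero _)
        | exact dvd_rfl
        | (rw [show m - c = -(c - m) by ring]; exact dvd_neg.mpr dvd_rfl)
    rw [hgcd] at hdvd
    have hd1 : c - m = 1 := by
      rcases Int.isUnit_iff.mp (isUnit_of_dvd_one hdvd) with h | h <;> omega
    refine ⟨S, ⟨i₁, hi₁⟩, ⟨j₁, Finset.mem_compl.mpr hj₁⟩, ?_⟩
    funext i j
    have hval : ∀ k, f k = if k ∈ S then c else m := by
      intro k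
      by_cases h : k ∈ S
      · rw [if_pos h]; exact hfS k h
      · rw [if_neg h]; exact hnotS k h
    rw [hf i j, hval i, hval j]
    by_cases hi : i ∈ S <;> by_cases hj : j ∈ S <;> simp [uST, hi, hj] <;> omega
  · rintro ⟨S, hSne, hScne, rfl⟩
    obtain ⟨i₁, hi₁⟩ := hSne
    obtain ⟨j₁, hj₁⟩ := hScne
    rw [Finset.mem_compl] at hj₁
    constructor
    · intro v hvdiag hv0 hvM hsub
      set g : Fin n → ℤ := fun i => v i L with hgdef
      have hg : ∀ i j, v i j = g i - g j := (ker_iff n hn v hvdiag).mp hvM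
      have hsame : ∀ i j : Fin n, (i ∈ S ↔ j ∈ S) → g i = g j := by
        intro i j hij
        by_contra hne
        have : ((i, j) : Fin n × Fin n) ∈ suppV n v := by
          simp only [suppV, Set.mem_setOf_eq]
          rw [hg i j]; omega
        have := hsub this
        simp only [suppV, Set.mem_setOf_eq, uST] at this
        by_cases hi : i ∈ S <;> by_cases hj : j ∈ S <;> simp [hi, hj] at this hij
      have hgne : ∃ p ∈ S, ∀ q ∉ S, g p ≠ g q := by
        have hvnc : ∃ i j, g i ≠ g j := by
          by_contra h
          push_neg at h
          apply hv0
          funext i j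
          rw [hg i j, h i j, sub_self]; rfl
        obtain ⟨i, j, hij⟩ := hvnc
        have hdiff : ¬ (i ∈ S ↔ j ∈ S) := fun h => hij (hsame i j h)
        by_cases hi : i ∈ S
        · have hj : j ∉ S := fun h => hdiff ⟨fun _ => h, fun _ => hi⟩
          refine ⟨i, hi, fun q hq => ?_⟩
          rw [hsame j q (by tauto)] at hij
          exact hij
        · have hj : j ∈ S := by tauto
          refine ⟨j, hj, fun q hq => ?_⟩
          rw [hsame i q (by tauto)] at hij
          exact fun h => hij h.symm
      obtain ⟨p, hp, hpq⟩ := hgne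
      apply Set.Subset.antisymm hsub
      rintro ⟨i, j⟩ he
      simp only [suppV, Set.mem_setOf_eq, uST] at he ⊢
      rw [hg i j]
      by_cases hi : i ∈ S <;> by_cases hj : j ∈ S <;> simp [hi, hj] at he ⊢
      · rw [hsame i p (by tauto)]
        intro h
        exact hpq j hj (by omega)
      · rw [hsame j p (by tauto)]
        intro h
        exact hpq i hi (by omega)
    · have h1 : Finset.univ.gcd (fun e : Fin n × Fin n => uST n S e.1 e.2) ∣ 1 := by
        have := Finset.gcd_dvd (f := fun e : Fin n × Fin n => uST n S e.1 e.2)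
          (Finset.mem_univ ((i₁, j₁) : Fin n × Fin n))
        simpa [uST, hi₁, hj₁] using this
      rcases Int.isUnit_iff.mp (isUnit_of_dvd_one h1) with h | h
      · exact h
      · exfalso
        have hnn := Int.abs_eq_normalize (Finset.univ.gcd (fun e : Fin n × Fin n => uST n S e.1 e.2))
        rw [Finset.normalize_gcd, h] at hnn
        simp at hnn
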